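/- Let λ* be any feasible solution of the LP with variables (x_r, y_r) for rectangles r ∈ R satisfying the orthogonal-order constraints and, for all pairs r, r', the constraint x_diff(r,r')/w(r,r') + y_diff(r,r')/h(r,r') ≥ 1, where w(r,r') = (w_r + w_{r'})/2, h(r,r') = (h_r + h_{r'})/2, and x_diff, y_diff are the (nonnegative, by orthogonal order) signed coordinate differences. Then the scaled layout λ = 2λ* (doubling all coordinates) is a disjoint layout: for every pair r ≠ r', |λ_x(r) − λ_x(r')| ≥ w(r,r') or |λ_y(r) − λ_y(r')| ≥ h(r,r'). -/
import Mathlib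


open scoped Classical

/-- An axis-parallel line in the plane: `vert a` is the line `x = a`,
`horiz b` is the line `y = b`. -/
inductive ALine where
  | vert : ℝ → ALine
  | horiz : ℝ → ALine

/-- `a` lies strictly between `u` and `v`. -/
def strictBetween (a u v : ℝ) : Prop := (u < a ∧ a < v) ∨ (v < a ∧ a < u)

/-- An axis-parallel line hits the segment joining `p` and `q` iff it meets the
relative interior of the segment but neither endpoint. -/
def ALine.hits : ALine → ℝ × ℝ → ℝ × ℝ → Prop
  | .vert a, p, q => strictBetween a p.1 q.1
  | .horiz b, p, q => strictBetween b p.2 q.2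

/-- The line contains the point `p`. -/
def ALine.containsPt : ALine → ℝ × ℝ → Prop
  | .vert a, p => p.1 = a
  | .horiz b, p => p.2 = b

/-- The line is vertical. -/
def ALine.isVert : ALine → Prop
  | .vert _ => True
  | .horiz _ => False

/-- The line is horizontal. -/
def ALine.isHoriz : ALine → Prop
  | .vert _ => False
  | .horiz _ => True

/-- Two layouts (assignments of centers to the items indexed by `ι`) have the
same orthogonal order. -/
def orthOrder {ι : Type*} (f g : ι → ℝ × ℝ) : Prop :=
  ∀ i j : ι,
    ((f i).1 < (f j).1 ↔ (g i).1 < (g j).1) ∧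
    ((f i).1 = (f j).1 ↔ (g i).1 = (g j).1) ∧
    ((f i).2 < (f j).2 ↔ (g i).2 < (g j).2) ∧
    ((f i).2 = (f j).2 ↔ (g i).2 = (g j).2)

/-- A layout of unit squares is disjoint iff any two distinct centers are at
distance at least 1 in the `x`- or the `y`-coordinate. -/
def disjointUnitLayout {ι : Type*} (f : ι → ℝ × ℝ) : Prop :=
  ∀ i j : ι, i ≠ j → 1 ≤ |(f i).1 - (f j).1| ∨ 1 ≤ |(f i).2 - (f j).2|

/-- Width of the bounding box of a layout of unit squares. -/
noncomputable def unitWidth {n : ℕ} (f : Fin n → ℝ × ℝ) : ℝ :=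
  (⨆ i, (f i).1) - (⨅ i, (f i).1) + 1

/-- Height of the bounding box of a layout of unit squares. -/
noncomputable def unitHeight {n : ℕ} (f : Fin n → ℝ × ℝ) : ℝ :=
  (⨆ i, (f i).2) - (⨅ i, (f i).2) + 1

/-- doubling any feasible LP solution (orthogonal-order
constraints plus the fractional separation constraint
`x_diff/w(r,r') + y_diff/h(r,r') ≥ 1`) gives a disjoint layout of the
rectangles. -/
theorem stmt14 {R : Type*} (w h : R → ℝ) (hw : ∀ r, 0 < w r) (hh : ∀ r, 0 < h r)
    (lay0 laystar : R → ℝ × ℝ)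
    (horth : orthOrder lay0 laystar)
    (hLP : ∀ r r' : R, r ≠ r' →
      (if (lay0 r').1 ≤ (lay0 r).1 then (laystar r).1 - (laystar r').1
        else (laystar r').1 - (laystar r).1) / ((w r + w r') / 2) +
      (if (lay0 r').2 ≤ (lay0 r).2 then (laystar r).2 - (laystar r').2
        else (laystar r').2 - (laystar r).2) / ((h r + h r') / 2) ≥ 1) :
    ∀ r r' : R, r ≠ r' →
      (w r + w r') / 2 ≤ |2 * (laystar r).1 - 2 * (laystar r').1| ∨
      (h r + h r') / 2 ≤ |2 * (laystar r).2 - 2 * (laystar r').2| := by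
  intro r r' hne
  have hW : 0 < (w r + w r') / 2 := by have := hw r; have := hw r'; linarith
  have hH : 0 < (h r + h r') / 2 := by have := hh r; have := hh r'; linarith
  set dx := (if (lay0 r').1 ≤ (lay0 r).1 then (laystar r).1 - (laystar r').1
      else (laystar r').1 - (laystar r).1) with hdx
  set dy := (if (lay0 r').2 ≤ (lay0 r).2 then (laystar r).2 - (laystar r').2
      else (laystar r').2 - (laystar r).2) with hdy
  have hsum := hLP r r' hne
  have hdxle : dx ≤ |(laystar r).1 - (laystar r').1| := by
    rw [hdx]
    obtain ⟨h1, h2, _, _⟩ := horth r r'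
    obtain ⟨h1', h2', _, _⟩ := horth r' r
    split_ifs with hc
    · rcases lt_or_eq_of_le hc with hlt | heq
      · have : (laystar r').1 < (laystar r).1 := h1'.mp hlt
        rw [abs_of_pos (by linarith)]
      · have : (laystar r').1 = (laystar r).1 := h2'.mp heq
        simp [this]
    · push_neg at hc
      have : (laystar r).1 < (laystar r').1 := h1.mp hc
      rw [abs_of_neg (by linarith)]; linarith
  have hdyle : dy ≤ |(laystar r).2 - (laystar r').2| := by
    rw [hdy]
    obtain ⟨_, _, h1, h2⟩ := horth r r'
    obtain ⟨_, _, h1', h2'⟩ := horth r' r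
    split_ifs with hc
    · rcases lt_or_eq_of_le hc with hlt | heq
      · have : (laystar r').2 < (laystar r).2 := h1'.mp hlt
        rw [abs_of_pos (by linarith)]
      · have : (laystar r').2 = (laystar r).2 := h2'.mp heq
        simp [this]
    · push_neg at hc
      have : (laystar r).2 < (laystar r').2 := h1.mp hc
      rw [abs_of_neg (by linarith)]; linarith
  have key : (w r + w r') / 2 ≤ 2 * dx ∨ (h r + h r') / 2 ≤ 2 * dy := by
    by_contra hcon
    push_neg at hcon
    obtain ⟨c1, c2⟩ := hcon
    have e1 : dx / ((w r + w r') / 2) < 1/2 := by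
      rw [div_lt_iff₀ hW]; linarith
    have e2 : dy / ((h r + h r') / 2) < 1/2 := by
      rw [div_lt_iff₀ hH]; linarith
    linarith
  rcases key with k | k
  · left
    have : |2 * (laystar r).1 - 2 * (laystar r').1| = 2 * |(laystar r).1 - (laystar r').1| := by
      rw [show 2 * (laystar r).1 - 2 * (laystar r').1 = 2 * ((laystar r).1 - (laystar r').1) by ring, abs_mul, abs_two]
    rw [this]; linarith
  · right
    have : |2 * (laystar r).2 - 2 * (laystar r').2| = 2 * |(laystar r).2 - (laystar r').2| := by
      rw [show 2 * (laystar r).2 - 2 * (laystar r').2 = 2 * ((laystar r).2 - (laystar r').2) by ring, abs_mul, abs_two]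
    rw [this]; linarith
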